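/- arXiv:1901.02815 — 5 statements merged into one kernel-verified Lean document; each statement's English description precedes it below -/
import Mathlib

section
/- Let $\bar\rho \in C^1([0,L])$ with $\bar\rho(z) > 0$ and $\bar\rho'(z) \le 0$ for all $z \in [0,L]$. Suppose $k \in \mathbb{R}$, $s \in \mathbb{C} \setminus \{0\}$, and $u \in C^2([0,L], \mathbb{C})$ is not identically zero, satisfies $u(0) = u(L) = 0$, and solves $-(\bar\rho u')' + k^2 \bar\rho u - (k^2 g / s^2) \bar\rho' u = 0$ on $[0,L]$, where $g > 0$. Then $s$ is purely imaginary (i.e. $\mathrm{Re}(s) = 0$). -/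
/-!
Multiplying the equation by `conj u` and integrating by parts turns it into
`∫ ρ |u'|² + k² ∫ ρ |u|² = (k² g / s²) ∫ ρ' |u|²`.
The left side is a positive real number and `∫ ρ' |u|² ≤ 0`,
so `s²` is a nonpositive real number, i.e. `s` is purely imaginary.
-/

open Set ComplexConjugate

theorem Complex.re_eq_zero_of_sq_eq_ofReal_of_nonpos {s : ℂ} {r : ℝ} (hs : s ^ 2 = r)
    (hr : r ≤ 0) : s.re = 0 := by
  have him : s.re * s.im = 0 := by
    have := congrArg Complex.im hs
    simp only [sq, Complex.mul_im, Complex.ofReal_im] at this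
    linarith
  have hre : s.re ^ 2 - s.im ^ 2 = r := by
    have := congrArg Complex.re hs
    simpa only [sq, Complex.mul_re, Complex.ofReal_re] using this
  rcases mul_eq_zero.mp him with h | h
  · exact h
  · nlinarith [sq_nonneg s.re]

theorem exists_deriv_ne_zero_of_eq_zero_left {E : Type*} [NormedAddCommGroup E]
    [NormedSpace ℝ E] {a b : ℝ} {u : ℝ → E} (hu : Differentiable ℝ u) (ha : u a = 0)
    (hne : ∃ z ∈ Icc a b, u z ≠ 0) : ∃ c ∈ Icc a b, deriv u c ≠ 0 := by
  by_contra! hderiv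
  obtain ⟨z, hz, hz0⟩ := hne
  refine hz0 ((constant_of_has_deriv_right_zero hu.continuous.continuousOn fun x hx => ?_) z hz
    |>.trans ha)
  simpa [hderiv x (Ico_subset_Icc_self hx)] using (hu x).hasDerivAt.hasDerivWithinAt (s := Ici x)

theorem integral_mul_norm_deriv_sq_pos {E : Type*} [NormedAddCommGroup E] [NormedSpace ℝ E]
    {a b : ℝ} {ρ : ℝ → ℝ} {u : ℝ → E} (hρ : ContinuousOn ρ (Icc a b))
    (hρpos : ∀ z ∈ Icc a b, 0 < ρ z) (hu : ContDiff ℝ 1 u) (ha : u a = 0)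
    (hne : ∃ z ∈ Icc a b, u z ≠ 0) : 0 < ∫ z in a..b, ρ z * ‖deriv u z‖ ^ 2 := by
  have hab : a < b := by
    obtain ⟨z, hz, hz0⟩ := hne
    exact lt_of_lt_of_le (lt_of_le_of_ne hz.1 (by rintro rfl; exact hz0 ha)) hz.2
  obtain ⟨c, hc, hc0⟩ :=
    exists_deriv_ne_zero_of_eq_zero_left (hu.differentiable one_ne_zero) ha hne
  refine intervalIntegral.integral_pos hab
    (hρ.mul ((hu.continuous_deriv le_rfl).norm.pow 2).continuousOn)
    (fun x hx => mul_nonneg (hρpos x (Ioc_subset_Icc_self hx)).le (sq_nonneg _))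
    ⟨c, hc, mul_pos (hρpos c hc) (by positivity)⟩

theorem integral_conj_mul_deriv_weight_mul_deriv {a b : ℝ} {ρ : ℝ → ℝ} {u : ℝ → ℂ}
    (hρ : ContDiff ℝ 1 ρ) (hu : ContDiff ℝ 2 u) (ha : u a = 0) (hb : u b = 0) :
    ∫ z in a..b, conj (u z) * deriv (fun w => (ρ w : ℂ) * deriv u w) z
      = -((∫ z in a..b, ρ z * ‖deriv u z‖ ^ 2 : ℝ) : ℂ) := by
  have hu' : ContDiff ℝ 1 (deriv u) := by
    have h : ContDiff ℝ (1 + 1 : ℕ) u := hu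
    exact (contDiff_succ_iff_deriv.mp h).2.2
  have hv : ContDiff ℝ 1 fun w => (ρ w : ℂ) * deriv u w :=
    (Complex.ofRealCLM.contDiff.comp hρ).mul hu'
  have hibp := intervalIntegral.integral_mul_deriv_eq_deriv_mul (a := a) (b := b)
    (fun x _ => ((hu.differentiable (by norm_num) x).hasDerivAt).star)
    (fun x _ => (hv.differentiable one_ne_zero x).hasDerivAt)
    ((hu'.continuous.star).intervalIntegrable a b)
    ((hv.continuous_deriv le_rfl).intervalIntegrable a b)
  simp only [ha, hb, star_zero, zero_mul, sub_zero, zero_sub] at hibp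
  rw [Complex.star_def] at hibp
  rw [hibp, ← intervalIntegral.integral_ofReal]
  congr 1
  refine intervalIntegral.integral_congr fun z _ => ?_
  rw [mul_left_comm, Complex.conj_mul']
  push_cast
  ring

theorem weighted_energy_identity {a b : ℝ} (hab : a ≤ b) {ρ : ℝ → ℝ} {u : ℝ → ℂ}
    (hρ : ContDiff ℝ 1 ρ) (hu : ContDiff ℝ 2 u) (ha : u a = 0) (hb : u b = 0) (μ c : ℂ)
    (heq : ∀ z ∈ Icc a b,
      -(deriv (fun w => (ρ w : ℂ) * deriv u w) z) + μ * (ρ z : ℂ) * u z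
        - c * ((deriv ρ z : ℝ) : ℂ) * u z = 0) :
    ((∫ z in a..b, ρ z * ‖deriv u z‖ ^ 2 : ℝ) : ℂ)
        + μ * ((∫ z in a..b, ρ z * ‖u z‖ ^ 2 : ℝ) : ℂ)
      = c * ((∫ z in a..b, deriv ρ z * ‖u z‖ ^ 2 : ℝ) : ℂ) := by
  have hcongr : EqOn (fun z => conj (u z) * deriv (fun w => (ρ w : ℂ) * deriv u w) z)
      (fun z => μ * ((ρ z * ‖u z‖ ^ 2 : ℝ) : ℂ)
        - c * ((deriv ρ z * ‖u z‖ ^ 2 : ℝ) : ℂ))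
      (uIcc a b) := by
    intro z hz
    rw [uIcc_of_le hab] at hz
    simp only
    rw [show deriv (fun w => (ρ w : ℂ) * deriv u w) z
        = μ * (ρ z : ℂ) * u z - c * ((deriv ρ z : ℝ) : ℂ) * u z by
      linear_combination -heq z hz]
    push_cast
    linear_combination (μ * ρ z - c * ((deriv ρ z : ℝ) : ℂ)) * Complex.conj_mul' (u z)
  have hρc : Continuous ρ := hρ.continuous
  have hρ'c : Continuous (deriv ρ) := hρ.continuous_deriv le_rfl
  have huc : Continuous u := hu.continuous
  have h := integral_conj_mul_deriv_weight_mul_deriv hρ hu ha hb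
  rw [intervalIntegral.integral_congr hcongr, intervalIntegral.integral_sub
    (Continuous.intervalIntegrable (by fun_prop) a b)
    (Continuous.intervalIntegrable (by fun_prop) a b),
    intervalIntegral.integral_const_mul, intervalIntegral.integral_const_mul,
    intervalIntegral.integral_ofReal, intervalIntegral.integral_ofReal] at h
  linear_combination h

theorem rayleigh_taylor_spectral_stability_general
    (L : ℝ) (ρ : ℝ → ℝ) (hρ : ContDiff ℝ 1 ρ)
    (hρpos : ∀ z ∈ Icc (0:ℝ) L, 0 < ρ z)
    (hρ' : ∀ z ∈ Icc (0:ℝ) L, deriv ρ z ≤ 0)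
    (k g : ℝ) (hg : 0 < g) (s : ℂ)
    (u : ℝ → ℂ) (hu : ContDiff ℝ 2 u)
    (hne : ∃ z ∈ Icc (0:ℝ) L, u z ≠ 0)
    (hbc0 : u 0 = 0) (hbcL : u L = 0)
    (heq : ∀ z ∈ Icc (0:ℝ) L,
      -(deriv (fun w => (ρ w : ℂ) * deriv u w) z)
        + (k^2 : ℂ) * (ρ z : ℂ) * u z
        - ((k^2 * g : ℝ) : ℂ) / s^2 * ((deriv ρ z : ℝ) : ℂ) * u z = 0) :
    s.re = 0 := by
  rcases eq_or_ne s 0 with rfl | hs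
  · rfl
  have hL : 0 ≤ L := by obtain ⟨z, hz, -⟩ := hne; exact hz.1.trans hz.2
  set A := ∫ z in (0:ℝ)..L, ρ z * ‖deriv u z‖ ^ 2
  set B := ∫ z in (0:ℝ)..L, ρ z * ‖u z‖ ^ 2
  set C := ∫ z in (0:ℝ)..L, deriv ρ z * ‖u z‖ ^ 2 with hC_def
  have hA : 0 < A := integral_mul_norm_deriv_sq_pos hρ.continuous.continuousOn hρpos
    (hu.of_le (by norm_num)) hbc0 hne
  have hB : 0 ≤ B := intervalIntegral.integral_nonneg hL fun z hz =>
    mul_nonneg (hρpos z hz).le (sq_nonneg _)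
  have hC : C ≤ 0 := by
    rw [hC_def, intervalIntegral.integral_of_le hL]
    exact MeasureTheory.setIntegral_nonpos measurableSet_Ioc fun z hz =>
      mul_nonpos_of_nonpos_of_nonneg (hρ' z (Ioc_subset_Icc_self hz)) (sq_nonneg _)
  have hP : 0 < A + k ^ 2 * B := by positivity
  have hid := weighted_energy_identity hL hρ hu hbc0 hbcL _ _ heq
  refine Complex.re_eq_zero_of_sq_eq_ofReal_of_nonpos (r := k ^ 2 * g * C / (A + k ^ 2 * B)) ?_
    (div_nonpos_of_nonpos_of_nonneg (mul_nonpos_of_nonneg_of_nonpos (by positivity) hC) hP.le)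
  have hP' : ((A + k ^ 2 * B : ℝ) : ℂ) ≠ 0 := Complex.ofReal_ne_zero.mpr hP.ne'
  rw [Complex.ofReal_div, eq_div_iff hP']
  push_cast at hid ⊢
  field_simp at hid
  linear_combination hid

theorem rayleigh_taylor_spectral_stability
    (L : ℝ) (hL : 0 < L) (ρ : ℝ → ℝ) (hρ : ContDiff ℝ 1 ρ)
    (hρpos : ∀ z ∈ Icc (0:ℝ) L, 0 < ρ z)
    (hρ' : ∀ z ∈ Icc (0:ℝ) L, deriv ρ z ≤ 0)
    (k g : ℝ) (hg : 0 < g) (s : ℂ) (hs : s ≠ 0)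
    (u : ℝ → ℂ) (hu : ContDiff ℝ 2 u)
    (hne : ∃ z ∈ Icc (0:ℝ) L, u z ≠ 0)
    (hbc0 : u 0 = 0) (hbcL : u L = 0)
    (heq : ∀ z ∈ Icc (0:ℝ) L,
      -(deriv (fun w => (ρ w : ℂ) * deriv u w) z)
        + (k^2 : ℂ) * (ρ z : ℂ) * u z
        - ((k^2 * g : ℝ) : ℂ) / s^2 * ((deriv ρ z : ℝ) : ℂ) * u z = 0) :
    s.re = 0 :=
  rayleigh_taylor_spectral_stability_general L ρ hρ hρpos hρ' k g hg s u hu hne hbc0 hbcL heq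
end

section
/- Let $U \in C^2([0,L],\mathbb{R})$, $k \in \mathbb{R}$, $s \in \mathbb{C}$ with $\mathrm{Re}(s) \ne 0$, and set $\gamma(z) = s + i k U(z)$. Suppose $u \in C^2([0,L],\mathbb{C})$ is not identically zero, satisfies $u(0) = u(L) = 0$, and solves the Rayleigh stability equation $-u'' + k^2 u + (i k U''(z)/\gamma(z)) u = 0$ on $[0,L]$. Then the function $U''$ changes sign on $[0,L]$, i.e. there exist $z_1, z_2 \in [0,L]$ with $U''(z_1) > 0$ and $U''(z_2) < 0$. -/
/-!
Multiplying Rayleigh's equation `u'' = V u`, `V = k² + i k U'' / γ`, by `ū` and integrating by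
parts against the boundary conditions gives `∫ |u'|² + ∫ V |u|² = 0`. Since
`Im V = k Re(s) U'' / |γ|²`, the imaginary part says `k Re(s) ∫ U'' |u|² / |γ|² = 0`; if `U''`
had a fixed sign, this would force `k U'' u ≡ 0`, so `u'' = k² u`, and then the real part
`∫ |u'|² + k² ∫ |u|² = 0` gives `u' ≡ 0`, hence `u ≡ 0`.
-/

open Set MeasureTheory intervalIntegral Complex ComplexConjugate

theorem ContDiff.continuous_deriv_deriv {𝕜 F : Type*} [NontriviallyNormedField 𝕜]
    [NormedAddCommGroup F] [NormedSpace 𝕜 F] {f : 𝕜 → F} (hf : ContDiff 𝕜 2 f) :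
    Continuous (deriv (deriv f)) :=
  (hf.deriv' (n := 1)).continuous_deriv_one

section DirichletProblem

variable {a b : ℝ} {u : ℝ → ℂ}

theorem integral_conj_mul_deriv_deriv (hu : ContDiff ℝ 2 u) (ha : u a = 0) (hb : u b = 0) :
    ∫ z in a..b, conj (u z) * deriv (deriv u) z = -((∫ z in a..b, ‖deriv u z‖ ^ 2 : ℝ) : ℂ) := by
  have hu' : Continuous (deriv u) := hu.continuous_deriv one_le_two
  have hconj (z : ℝ) : HasDerivAt (fun z => conj (u z)) (conj (deriv u z)) z :=
    (hu.differentiable two_ne_zero z).hasDerivAt.star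
  rw [integral_mul_deriv_eq_deriv_mul (fun z _ => hconj z)
    (fun z _ => (hu.differentiable_deriv_two z).hasDerivAt)
    ((Complex.continuous_conj.comp hu').intervalIntegrable a b)
    (hu.continuous_deriv_deriv.intervalIntegrable a b)]
  simp [ha, hb, Complex.conj_mul', ← integral_ofReal]

theorem integral_im_mul_sq_norm_eq_zero (hu : ContDiff ℝ 2 u) (ha : u a = 0) (hb : u b = 0)
    {V : ℝ → ℂ} (hV : ∀ z ∈ uIcc a b, deriv (deriv u) z = V z * u z) :
    ∫ z in a..b, (V z).im * ‖u z‖ ^ 2 = 0 := by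
  have hcont : Continuous fun z => conj (u z) * deriv (deriv u) z :=
    (Complex.continuous_conj.comp hu.continuous).mul hu.continuous_deriv_deriv
  calc ∫ z in a..b, (V z).im * ‖u z‖ ^ 2
      = ∫ z in a..b, (conj (u z) * deriv (deriv u) z).im := by
        refine integral_congr fun z hz => ?_
        simp only [hV z hz]
        rw [mul_left_comm, Complex.conj_mul', ← Complex.ofReal_pow, Complex.im_mul_ofReal]
    _ = 0 := by
        have := intervalIntegral_im (hcont.intervalIntegrable a b) (μ := volume)
        simp only [RCLike.im_to_complex] at this
        rw [this, integral_conj_mul_deriv_deriv hu ha hb, Complex.neg_im, Complex.ofReal_im,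
          neg_zero]

theorem eqOn_zero_of_integral_eq_zero_of_nonneg {g : ℝ → ℝ} (hab : a < b)
    (hg : ContinuousOn g (Icc a b)) (hg0 : ∀ z ∈ Icc a b, 0 ≤ g z) (hint : ∫ z in a..b, g z = 0) :
    EqOn g 0 (Icc a b) := by
  intro z hz
  by_contra hne
  have := integral_pos hab hg (fun x hx => hg0 x (Ioc_subset_Icc_self hx))
    ⟨z, hz, (hg0 z hz).lt_of_ne' hne⟩
  exact this.ne' hint

theorem mul_eq_zero_of_integral_mul_sq_eq_zero {f w : ℝ → ℝ} (hab : a < b)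
    (hf : ContinuousOn f (Icc a b)) (hw : ContinuousOn w (Icc a b))
    (hsign : (∀ z ∈ Icc a b, 0 ≤ f z) ∨ ∀ z ∈ Icc a b, f z ≤ 0)
    (hint : ∫ z in a..b, f z * w z ^ 2 = 0) (z : ℝ) (hz : z ∈ Icc a b) : f z * w z = 0 := by
  have hfw : ContinuousOn (fun z => f z * w z ^ 2) (Icc a b) := hf.mul (hw.pow 2)
  suffices f z * w z ^ 2 = 0 by simpa using this
  rcases hsign with hf0 | hf0
  · exact eqOn_zero_of_integral_eq_zero_of_nonneg hab hfw
      (fun z hz => mul_nonneg (hf0 z hz) (sq_nonneg _)) hint hz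
  · simpa using eqOn_zero_of_integral_eq_zero_of_nonneg hab hfw.neg
      (fun z hz => neg_nonneg.2 (mul_nonpos_of_nonpos_of_nonneg (hf0 z hz) (sq_nonneg _)))
      (by simp [intervalIntegral.integral_neg, hint]) hz

theorem eqOn_zero_of_deriv_deriv_eq_mul (hab : a < b) (hu : ContDiff ℝ 2 u) (ha : u a = 0)
    (hb : u b = 0) {V : ℝ → ℝ} (hV0 : ∀ z ∈ Icc a b, 0 ≤ V z)
    (hV : ∀ z ∈ Icc a b, deriv (deriv u) z = V z * u z) : EqOn u 0 (Icc a b) := by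
  have hpot : ∫ z in a..b, V z * ‖u z‖ ^ 2 = -∫ z in a..b, ‖deriv u z‖ ^ 2 := by
    have := integral_conj_mul_deriv_deriv hu ha hb
    rw [integral_congr (g := fun z => ((V z * ‖u z‖ ^ 2 : ℝ) : ℂ)) fun z hz => ?_,
      integral_ofReal] at this
    · exact_mod_cast this
    · rw [uIcc_of_le hab.le] at hz
      simp only [hV z hz]
      rw [mul_left_comm, Complex.conj_mul']
      push_cast; ring
  have hkin : ∫ z in a..b, ‖deriv u z‖ ^ 2 = 0 := by
    have := integral_nonneg hab.le (μ := volume) fun z hz => mul_nonneg (hV0 z hz) (sq_nonneg ‖u z‖)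
    have := integral_nonneg hab.le (μ := volume) fun z _ => sq_nonneg ‖deriv u z‖
    linarith
  have hderiv : EqOn (deriv u) 0 (Icc a b) := fun z hz => by
    simpa using eqOn_zero_of_integral_eq_zero_of_nonneg hab
      ((hu.continuous_deriv one_le_two).norm.pow 2).continuousOn
      (fun z _ => sq_nonneg ‖deriv u z‖) hkin hz
  intro z hz
  refine (constant_of_has_deriv_right_zero hu.continuous.continuousOn (fun x hx => ?_) z hz).trans
    ha
  have hux := (hu.differentiable two_ne_zero x).hasDerivAt
  rw [hderiv (Ico_subset_Icc_self hx)] at hux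
  exact hux.hasDerivWithinAt

theorem mul_deriv_deriv_mul_eq_zero_of_rayleigh {a b k : ℝ} {s : ℂ} {U : ℝ → ℝ} (hab : a < b)
    (hU : ContDiff ℝ 2 U) (hs : s.re ≠ 0) (hu : ContDiff ℝ 2 u) (ha : u a = 0) (hb : u b = 0)
    (hsign : (∀ z ∈ Icc a b, 0 ≤ deriv (deriv U) z) ∨ ∀ z ∈ Icc a b, deriv (deriv U) z ≤ 0)
    (hV : ∀ z ∈ Icc a b, deriv (deriv u) z =
      ((k : ℂ) ^ 2 + I * k * ((deriv (deriv U) z : ℝ) : ℂ) / (s + I * k * U z)) * u z) :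
    ∀ z ∈ Icc a b, (k : ℂ) * ((deriv (deriv U) z : ℝ) : ℂ) * u z = 0 := by
  set γ : ℝ → ℂ := fun z => s + I * k * U z
  have hγc : Continuous γ := by fun_prop
  have hγ (z : ℝ) : ‖γ z‖ ≠ 0 := fun h => hs (by simpa [γ] using congrArg re (norm_eq_zero.1 h))
  have hImV (z : ℝ) : ((k : ℂ) ^ 2 + I * k * ((deriv (deriv U) z : ℝ) : ℂ) / γ z).im * ‖u z‖ ^ 2
      = k * s.re * (deriv (deriv U) z * (‖u z‖ / ‖γ z‖) ^ 2) := by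
    simp only [γ, sq, add_im, mul_im, ofReal_re, ofReal_im, mul_zero, zero_mul, add_zero, div_im,
      mul_re, I_re, I_im, sub_self, one_mul, zero_add, add_re, normSq_eq_norm_sq, zero_div,
      sub_zero]
    field_simp [hγ z]
  have hint := integral_im_mul_sq_norm_eq_zero hu ha hb
    (V := fun z => (k : ℂ) ^ 2 + I * k * ((deriv (deriv U) z : ℝ) : ℂ) / γ z)
    (by rwa [uIcc_of_le hab.le])
  simp only [hImV, intervalIntegral.integral_const_mul, mul_eq_zero] at hint
  intro z hz
  rcases hint with (hk | hs0) | hint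
  · simp [hk]
  · exact absurd hs0 hs
  · rcases mul_eq_zero.1 (mul_eq_zero_of_integral_mul_sq_eq_zero hab
      hU.continuous_deriv_deriv.continuousOn (hu.continuous.norm.div hγc.norm hγ).continuousOn
      hsign hint z hz) with h | h
    · simp [h]
    · simp [norm_eq_zero.1 ((div_eq_zero_iff.1 h).resolve_right (hγ z))]

end DirichletProblem

theorem rayleigh_inflection_point_criterion
    (L : ℝ) (hL : 0 < L) (U : ℝ → ℝ) (hU : ContDiff ℝ 2 U)
    (k : ℝ) (s : ℂ) (hs : s.re ≠ 0)
    (u : ℝ → ℂ) (hu : ContDiff ℝ 2 u)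
    (hne : ∃ z ∈ Icc (0:ℝ) L, u z ≠ 0)
    (hbc0 : u 0 = 0) (hbcL : u L = 0)
    (heq : ∀ z ∈ Icc (0:ℝ) L,
      -(deriv (deriv u) z) + (k^2 : ℂ) * u z
        + (Complex.I * k * ((deriv (deriv U) z : ℝ) : ℂ) / (s + Complex.I * k * (U z : ℂ))) * u z = 0) :
    (∃ z₁ ∈ Icc (0:ℝ) L, 0 < deriv (deriv U) z₁) ∧
    (∃ z₂ ∈ Icc (0:ℝ) L, deriv (deriv U) z₂ < 0) := by
  have hV (z : ℝ) (hz : z ∈ Icc 0 L) : deriv (deriv u) z =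
      ((k : ℂ) ^ 2 + I * k * ((deriv (deriv U) z : ℝ) : ℂ) / (s + I * k * U z)) * u z := by
    linear_combination -heq z hz
  have hvanish (hsign : (∀ z ∈ Icc 0 L, 0 ≤ deriv (deriv U) z) ∨
      ∀ z ∈ Icc 0 L, deriv (deriv U) z ≤ 0) : EqOn u 0 (Icc 0 L) := by
    refine eqOn_zero_of_deriv_deriv_eq_mul hL hu hbc0 hbcL (V := fun _ => k ^ 2)
      (fun _ _ => sq_nonneg k) fun z hz => ?_
    rw [hV z hz]
    push_cast
    linear_combination (I / (s + I * k * U z)) *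
      mul_deriv_deriv_mul_eq_zero_of_rayleigh hL hU hs hu hbc0 hbcL hsign hV z hz
  obtain ⟨z, hz, huz⟩ := hne
  constructor
  · by_contra! h
    exact huz (hvanish (Or.inr h) hz)
  · by_contra! h
    exact huz (hvanish (Or.inl h) hz)
end

section
/- Let $\bar\rho \in C^1([0,L])$ with $\bar\rho > 0$ and $\bar\rho' \le 0$, $U \in C^2([0,L],\mathbb{R})$ with $U'(z) \ne 0$ for all $z$, $g > 0$, and suppose the Richardson number $\mathrm{Ri}(z) = -g\bar\rho'(z)/(\bar\rho(z)U'(z)^2)$ satisfies $\mathrm{Ri}(z) \ge 1/4$ for all $z \in [0,L]$. Let $k \ne 0$, $s \in \mathbb{C}$ with $\mathrm{Re}(s) \ne 0$, $\gamma(z) = s + ikU(z)$, and let $v \in C^2([0,L],\mathbb{C})$ satisfy $v(0)=v(L)=0$ and the modified Taylor-Goldstein equation $-(\bar\rho\gamma v')' + k^2\bar\rho\gamma v + (ik/2)(\bar\rho U')' v + (\bar\rho\gamma'^2/(4\gamma) - k^2 g\bar\rho'/\gamma)v = 0$. Then $v \equiv 0$. -/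
open Set Complex ComplexConjugate

/-!
Multiply the equation by `conj v` and integrate by parts over `[0, L]`: the boundary terms
vanish and the real part of the result is `Re s · ∫ H` with `H = milesHowardDensity`. Since
`(I k U')² / (4 γ)` and `k² g ρ' / γ` have real numerators, their real parts are
`Re γ / |γ|²` times those numerators, and `Re γ = Re s`. The Richardson condition `Ri ≥ 1/4`
makes `H ≥ ρ k² |v|² ≥ 0`; as `Re s ≠ 0`, `∫ H = 0`, which forces `v = 0`.
-/

/-- Writing `ρ U'² Ri = -g ρ'`, this is
`ρ (|v'|² + k² |v|²) + (k² ρ U'² / |γ|²) (Ri - 1/4) |v|²`. -/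
noncomputable def milesHowardDensity (ρ ρ' U' g k : ℝ) (γ v v' : ℂ) : ℝ :=
  ρ * (normSq v' + k ^ 2 * normSq v)
    + k ^ 2 * (-(ρ * U' ^ 2) / 4 - g * ρ') * normSq v / normSq γ

theorem re_modifiedTaylorGoldstein_mul_conj (ρ ρ' U' c g k : ℝ) (γ v v' : ℂ) :
    (((k ^ 2 : ℂ) * ρ * γ * v + (I * k / 2) * (c : ℂ) * v
        + ((ρ : ℂ) * (I * k * (U' : ℂ)) ^ 2 / (4 * γ)
          - ((k ^ 2 * g : ℝ) : ℂ) * (ρ' : ℂ) / γ) * v)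
          * conj v + (ρ : ℂ) * γ * v' * conj v').re
      = γ.re * milesHowardDensity ρ ρ' U' g k γ v v' := by
  rcases eq_or_ne γ 0 with rfl | hγ
  · simp [milesHowardDensity, mul_re, mul_im]
    ring
  have hN : normSq γ ≠ 0 := normSq_eq_zero.not.mpr hγ
  simp only [milesHowardDensity, add_re, sub_re, mul_re, div_re, mul_im, div_im, sub_im,
    add_im, I_re, I_im, ofReal_re, ofReal_im, conj_re, conj_im, normSq_mul, normSq_ofNat,
    re_ofNat, im_ofNat, pow_two]
  rw [normSq_apply v, normSq_apply v']
  field_simp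
  ring

theorem sub_nonneg_of_quarter_le_richardson {ρ ρ' U' g : ℝ} (hρ : 0 < ρ) (hU' : U' ≠ 0)
    (hRi : 1 / 4 ≤ -(g * ρ') / (ρ * U' ^ 2)) : 0 ≤ -(ρ * U' ^ 2) / 4 - g * ρ' := by
  have := (le_div_iff₀ (by positivity)).mp hRi
  linarith

theorem mul_normSq_le_milesHowardDensity {ρ ρ' U' g : ℝ} (k : ℝ) (γ v v' : ℂ)
    (hρ : 0 ≤ ρ) (hRi : 0 ≤ -(ρ * U' ^ 2) / 4 - g * ρ') :
    ρ * k ^ 2 * normSq v ≤ milesHowardDensity ρ ρ' U' g k γ v v' := by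
  unfold milesHowardDensity
  have hshear : 0 ≤ k ^ 2 * (-(ρ * U' ^ 2) / 4 - g * ρ') * normSq v / normSq γ :=
    div_nonneg (mul_nonneg (mul_nonneg (sq_nonneg k) hRi) (normSq_nonneg v)) (normSq_nonneg γ)
  nlinarith [mul_nonneg hρ (normSq_nonneg v')]

theorem integral_deriv_mul_conj_add_mul_conj_deriv_eq_zero {w v : ℝ → ℂ} {a b : ℝ}
    (hw : ContDiff ℝ 1 w) (hv : ContDiff ℝ 1 v) (ha : v a = 0) (hb : v b = 0) :
    ∫ z in a..b, (deriv w z * conj (v z) + w z * conj (deriv v z)) = 0 := by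
  simpa [ha, hb] using intervalIntegral.integral_deriv_mul_eq_sub
    (fun x _ => (hw.differentiable one_ne_zero x).hasDerivAt)
    (fun x _ => (hv.differentiable one_ne_zero x).hasDerivAt.star)
    ((hw.continuous_deriv le_rfl).intervalIntegrable a b)
    ((continuous_star.comp (hv.continuous_deriv le_rfl)).intervalIntegrable a b)

theorem eq_zero_of_intervalIntegral_eq_zero_of_nonneg {f : ℝ → ℝ} {a b : ℝ} (hab : a < b)
    (hf : ContinuousOn f (Icc a b)) (hf₀ : ∀ x ∈ Icc a b, 0 ≤ f x)
    (hint : ∫ x in a..b, f x = 0) : ∀ x ∈ Icc a b, f x = 0 := by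
  intro x hx
  by_contra hfx
  exact (intervalIntegral.integral_pos hab hf (fun y hy => hf₀ y (Ioc_subset_Icc_self hy))
    ⟨x, hx, (hf₀ x hx).lt_of_ne' hfx⟩).ne' hint

theorem eq_zero_of_re_eq_mul_of_intervalIntegral_eq_zero {f : ℝ → ℂ} {H : ℝ → ℝ}
    {a b c : ℝ} (hab : a < b) (hf : Continuous f) (hint : ∫ x in a..b, f x = 0) (hc : c ≠ 0)
    (hfH : ∀ x ∈ Icc a b, (f x).re = c * H x) (hH₀ : ∀ x ∈ Icc a b, 0 ≤ H x) :
    ∀ x ∈ Icc a b, H x = 0 := by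
  have hHcont : ContinuousOn H (Icc a b) :=
    ((continuous_re.comp hf).div_const c).continuousOn.congr fun x hx => by simp [hfH x hx, hc]
  have hreint : ∫ x in a..b, (f x).re = 0 := by
    change ∫ x in a..b, reCLM (f x) = 0
    rw [reCLM.intervalIntegral_comp_comm (hf.intervalIntegrable a b), hint, map_zero]
  rw [intervalIntegral.integral_congr (fun x hx => hfH x (uIcc_of_le hab.le ▸ hx)),
    intervalIntegral.integral_const_mul, mul_eq_zero] at hreint
  exact eq_zero_of_intervalIntegral_eq_zero_of_nonneg hab hHcont hH₀ (hreint.resolve_left hc)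

theorem miles_howard_criterion_general
    (L : ℝ) (hL : 0 < L) (ρ : ℝ → ℝ) (hρ : ContDiff ℝ 1 ρ)
    (hρpos : ∀ z ∈ Icc (0:ℝ) L, 0 < ρ z)
    (U : ℝ → ℝ) (hU : ContDiff ℝ 2 U)
    (hU' : ∀ z ∈ Icc (0:ℝ) L, deriv U z ≠ 0)
    (g : ℝ)
    (hRi : ∀ z ∈ Icc (0:ℝ) L, (1:ℝ)/4 ≤ -(g * deriv ρ z) / (ρ z * (deriv U z)^2))
    (k : ℝ) (hk : k ≠ 0) (s : ℂ) (hs : s.re ≠ 0)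
    (v : ℝ → ℂ) (hv : ContDiff ℝ 2 v)
    (hbc0 : v 0 = 0) (hbcL : v L = 0)
    (heq : ∀ z ∈ Icc (0:ℝ) L,
      -(deriv (fun w => (ρ w : ℂ) * (s + Complex.I * k * (U w : ℂ)) * deriv v w) z)
        + (k^2 : ℂ) * (ρ z : ℂ) * (s + Complex.I * k * (U z : ℂ)) * v z
        + (Complex.I * k / 2) * ((deriv (fun w => ρ w * deriv U w) z : ℝ) : ℂ) * v z
        + ((ρ z : ℂ) * (Complex.I * k * ((deriv U z : ℝ) : ℂ))^2 / (4 * (s + Complex.I * k * (U z : ℂ)))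
            - ((k^2 * g : ℝ) : ℂ) * ((deriv ρ z : ℝ) : ℂ) / (s + Complex.I * k * (U z : ℂ))) * v z
        = 0) :
    ∀ z ∈ Icc (0:ℝ) L, v z = 0 := by
  set γ : ℝ → ℂ := fun z => s + I * k * (U z : ℂ)
  set w : ℝ → ℂ := fun z => (ρ z : ℂ) * γ z * deriv v z
  set f : ℝ → ℂ := fun z => deriv w z * conj (v z) + w z * conj (deriv v z)
  set H : ℝ → ℝ := fun z =>
    milesHowardDensity (ρ z) (deriv ρ z) (deriv U z) g k (γ z) (v z) (deriv v z)
  have hv' : ContDiff ℝ 1 (deriv v) := hv.deriv' (n := 1)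
  have hw : ContDiff ℝ 1 w := ((ofRealCLM.contDiff.comp hρ).mul (contDiff_const.add
    (contDiff_const.mul (ofRealCLM.contDiff.comp (hU.of_le one_le_two))))).mul hv'
  have hf : Continuous f :=
    ((hw.continuous_deriv le_rfl).mul (continuous_conj.comp hv.continuous)).add
      (hw.continuous.mul (continuous_conj.comp hv'.continuous))
  have hfH : ∀ z ∈ Icc 0 L, (f z).re = s.re * H z := by
    intro z hz
    calc (f z).re = (γ z).re * H z := by
          rw [← re_modifiedTaylorGoldstein_mul_conj (ρ z) (deriv ρ z) (deriv U z)
            (deriv (fun w => ρ w * deriv U w) z) g k (γ z) (v z) (deriv v z)]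
          congr 1
          simp only [f, γ]
          linear_combination (-conj (v z)) * heq z hz
      _ = s.re * H z := by simp [γ]
  have hHlower : ∀ z ∈ Icc 0 L, ρ z * k ^ 2 * normSq (v z) ≤ H z := fun z hz =>
    mul_normSq_le_milesHowardDensity k _ _ _ (hρpos z hz).le
      (sub_nonneg_of_quarter_le_richardson (hρpos z hz) (hU' z hz) (hRi z hz))
  have hH₀ : ∀ z ∈ Icc 0 L, H z = 0 := eq_zero_of_re_eq_mul_of_intervalIntegral_eq_zero hL hf
    (integral_deriv_mul_conj_add_mul_conj_deriv_eq_zero hw (hv.of_le one_le_two) hbc0 hbcL) hs hfH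
    fun z hz => (mul_nonneg (mul_nonneg (hρpos z hz).le (sq_nonneg k)) (normSq_nonneg _)).trans
      (hHlower z hz)
  intro z hz
  by_contra hvz
  have : 0 < ρ z * k ^ 2 * normSq (v z) := by
    have := hρpos z hz
    have := normSq_pos.mpr hvz
    positivity
  linarith [hHlower z hz, hH₀ z hz]

theorem miles_howard_criterion
    (L : ℝ) (hL : 0 < L) (ρ : ℝ → ℝ) (hρ : ContDiff ℝ 1 ρ)
    (hρpos : ∀ z ∈ Icc (0:ℝ) L, 0 < ρ z)
    (hρ' : ∀ z ∈ Icc (0:ℝ) L, deriv ρ z ≤ 0)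
    (U : ℝ → ℝ) (hU : ContDiff ℝ 2 U)
    (hU' : ∀ z ∈ Icc (0:ℝ) L, deriv U z ≠ 0)
    (g : ℝ) (hg : 0 < g)
    (hRi : ∀ z ∈ Icc (0:ℝ) L, (1:ℝ)/4 ≤ -(g * deriv ρ z) / (ρ z * (deriv U z)^2))
    (k : ℝ) (hk : k ≠ 0) (s : ℂ) (hs : s.re ≠ 0)
    (v : ℝ → ℂ) (hv : ContDiff ℝ 2 v)
    (hbc0 : v 0 = 0) (hbcL : v L = 0)
    (heq : ∀ z ∈ Icc (0:ℝ) L,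
      -(deriv (fun w => (ρ w : ℂ) * (s + Complex.I * k * (U w : ℂ)) * deriv v w) z)
        + (k^2 : ℂ) * (ρ z : ℂ) * (s + Complex.I * k * (U z : ℂ)) * v z
        + (Complex.I * k / 2) * ((deriv (fun w => ρ w * deriv U w) z : ℝ) : ℂ) * v z
        + ((ρ z : ℂ) * (Complex.I * k * ((deriv U z : ℝ) : ℂ))^2 / (4 * (s + Complex.I * k * (U z : ℂ)))
            - ((k^2 * g : ℝ) : ℂ) * ((deriv ρ z : ℝ) : ℂ) / (s + Complex.I * k * (U z : ℂ))) * v z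
        = 0) :
    ∀ z ∈ Icc (0:ℝ) L, v z = 0 :=
  miles_howard_criterion_general L hL ρ hρ hρpos U hU hU' g hRi k hk s hs v hv hbc0 hbcL heq
end

section
/- For the rescaled Kaufmann-Scully vortex with vorticity $W_\epsilon(r) = 2/(1+\epsilon r^2)^2$ and angular velocity $\Omega_\epsilon(r) = 1/(1+\epsilon r^2)$, let $m, k$ be real with $m \ne 0$, and suppose $0 < \epsilon \le 4k^2/m^2$. Then the Richardson number $\mathrm{Ri}_\epsilon(r) = (k^2/m^2)\,\Phi_\epsilon(r)/\Omega_\epsilon'(r)^2$, where $\Phi_\epsilon = 2\Omega_\epsilon W_\epsilon$, satisfies $\mathrm{Ri}_\epsilon(r) \ge 1/4$ for all $r > 0$. -/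
/-! With `c = k² / m²`, the Richardson number simplifies to `c (1 + ε r²) / (ε² r²)`, which is
at least `c · ε r² / (ε² r²) = c / ε`; the hypothesis `ε ≤ 4 c` makes this at least `1 / 4`. -/

theorem hasDerivAt_one_div_one_add_mul_sq {ε r : ℝ} (h : 1 + ε * r ^ 2 ≠ 0) :
    HasDerivAt (fun s : ℝ => 1 / (1 + ε * s ^ 2)) (-(2 * ε * r) / (1 + ε * r ^ 2) ^ 2) r := by
  have hinner : HasDerivAt (fun s : ℝ => 1 + ε * s ^ 2) (2 * ε * r) r := by
    simpa [mul_comm, mul_assoc, mul_left_comm] using ((hasDerivAt_pow 2 r).const_mul ε).const_add 1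
  exact ((hasDerivAt_const r (1 : ℝ)).div hinner h).congr_deriv (by ring)

theorem kaufmannScully_richardson_eq (c ε r : ℝ) (h : 1 + ε * r ^ 2 ≠ 0) (hε : ε ≠ 0)
    (hr : r ≠ 0) :
    c * (2 * (1 / (1 + ε * r ^ 2)) * (2 / (1 + ε * r ^ 2) ^ 2)) /
        (-(2 * ε * r) / (1 + ε * r ^ 2) ^ 2) ^ 2 =
      c * (1 + ε * r ^ 2) / (ε ^ 2 * r ^ 2) := by
  field_simp

theorem one_div_four_le_kaufmannScully_richardson {c ε r : ℝ} (hε : 0 < ε) (hc : ε ≤ 4 * c)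
    (hr : r ≠ 0) : 1 / 4 ≤ c * (1 + ε * r ^ 2) / (ε ^ 2 * r ^ 2) := by
  have hr2 : 0 < r ^ 2 := by positivity
  rw [le_div_iff₀ (by positivity)]
  nlinarith [mul_le_mul_of_nonneg_right hc (mul_pos hε hr2).le]

theorem rescaled_kaufmann_scully_richardson_general
    (m k ε : ℝ) (hε : 0 < ε) (hε4 : ε ≤ 4 * k^2 / m^2)
    (Ωε Wε Φε : ℝ → ℝ)
    (hΩ : ∀ r, Ωε r = 1 / (1 + ε * r^2))
    (hW : ∀ r, Wε r = 2 / (1 + ε * r^2)^2)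
    (hΦ : ∀ r, Φε r = 2 * Ωε r * Wε r) :
    ∀ r > (0:ℝ), (1:ℝ)/4 ≤ (k^2 / m^2) * Φε r / (deriv Ωε r)^2 := by
  intro r hr
  have hden : 1 + ε * r ^ 2 ≠ 0 := by positivity
  obtain rfl : Ωε = fun s => 1 / (1 + ε * s ^ 2) := funext hΩ
  rw [(hasDerivAt_one_div_one_add_mul_sq hden).deriv, hΦ, hW,
    kaufmannScully_richardson_eq _ _ _ hden hε.ne' hr.ne']
  have hk : ε ≤ 4 * (k ^ 2 / m ^ 2) := by rwa [mul_div_assoc] at hε4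
  exact one_div_four_le_kaufmannScully_richardson hε hk hr.ne'

theorem rescaled_kaufmann_scully_richardson
    (m k ε : ℝ) (hm : m ≠ 0) (hε : 0 < ε) (hε4 : ε ≤ 4 * k^2 / m^2)
    (Ωε Wε Φε : ℝ → ℝ)
    (hΩ : ∀ r, Ωε r = 1 / (1 + ε * r^2))
    (hW : ∀ r, Wε r = 2 / (1 + ε * r^2)^2)
    (hΦ : ∀ r, Φε r = 2 * Ωε r * Wε r) :
    ∀ r > (0:ℝ), (1:ℝ)/4 ≤ (k^2 / m^2) * Φε r / (deriv Ωε r)^2 :=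
  rescaled_kaufmann_scully_richardson_general m k ε hε hε4 Ωε Wε Φε hΩ hW hΦ
end

section
/- Let $\Omega, W, \Phi : (0,\infty) \to \mathbb{R}$ be continuous with $\Phi(r) \ge 0$ for all $r > 0$. Let $m \ne 0$ be an integer, $k \ne 0$, $a, b \in \mathbb{R}$ with $a \ne 0$ and $b \le 0$, and suppose $\Omega(r) > 0$ and $\frac{d}{dr}\big(W(r)/(m^2+k^2r^2)\big) < 0$ for all $r > 0$. If $u : (0,\infty) \to \mathbb{C}$ is a nonzero function (with $r|u|^2$ integrable, $u$ smooth enough) satisfying the Howard-Gupta imaginary-part identity $a\int_0^\infty \Big\{\frac{r}{a^2+(\Omega-b)^2}\frac{d}{dr}\Big(\frac{W}{m^2+k^2r^2}\Big) + \frac{2(b-\Omega)}{(a^2+(\Omega-b)^2)^2}\frac{k^2}{m^2}\frac{r^2\Phi}{m^2+k^2r^2}\Big\}|u|^2\,r\,dr = 0$, then a contradiction follows; i.e., no such nonzero $u$ exists. -/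
open Set MeasureTheory

theorem howard_gupta_no_unstable_mode_b_nonpos
    (Ω W Φ : ℝ → ℝ)
    (hΩc : ContinuousOn Ω (Ioi 0)) (hWc : ContinuousOn W (Ioi 0))
    (hΦc : ContinuousOn Φ (Ioi 0)) (hΦ : ∀ r > 0, 0 ≤ Φ r)
    (m : ℤ) (hm : m ≠ 0) (k : ℝ) (hk : k ≠ 0)
    (a b : ℝ) (ha : a ≠ 0) (hb : b ≤ 0)
    (hΩpos : ∀ r > 0, 0 < Ω r)
    (hWdec : ∀ r > 0, deriv (fun ρ => W ρ / ((m:ℝ)^2 + k^2 * ρ^2)) r < 0)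
    (u : ℝ → ℂ) (huc : ContinuousOn u (Ioi 0))
    (hune : ∃ r > (0:ℝ), u r ≠ 0)
    (hint : IntegrableOn (fun r =>
      (r / (a^2 + (Ω r - b)^2) * deriv (fun ρ => W ρ / ((m:ℝ)^2 + k^2 * ρ^2)) r
        + 2 * (b - Ω r) / (a^2 + (Ω r - b)^2)^2 * (k^2 / (m:ℝ)^2)
            * (r^2 * Φ r / ((m:ℝ)^2 + k^2 * r^2))) * ‖u r‖^2 * r) (Ioi 0))
    (hident : a * ∫ r in Ioi (0:ℝ),
      (r / (a^2 + (Ω r - b)^2) * deriv (fun ρ => W ρ / ((m:ℝ)^2 + k^2 * ρ^2)) r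
        + 2 * (b - Ω r) / (a^2 + (Ω r - b)^2)^2 * (k^2 / (m:ℝ)^2)
            * (r^2 * Φ r / ((m:ℝ)^2 + k^2 * r^2))) * ‖u r‖^2 * r = 0) :
    False := by
  set F : ℝ → ℝ := fun r =>
      (r / (a^2 + (Ω r - b)^2) * deriv (fun ρ => W ρ / ((m:ℝ)^2 + k^2 * ρ^2)) r
        + 2 * (b - Ω r) / (a^2 + (Ω r - b)^2)^2 * (k^2 / (m:ℝ)^2)
            * (r^2 * Φ r / ((m:ℝ)^2 + k^2 * r^2))) * ‖u r‖^2 * r with hFdef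
  have hI0 : ∫ r in Ioi (0:ℝ), F r = 0 := by
    rcases mul_eq_zero.1 hident with h | h
    · exact absurd h ha
    · exact h
  have hmR : (m:ℝ) ≠ 0 := Int.cast_ne_zero.mpr hm
  have hm2 : (0:ℝ) < (m:ℝ)^2 := by positivity
  -- the coefficient is strictly negative on Ioi 0
  have hA : ∀ r ∈ Ioi (0:ℝ),
      (r / (a^2 + (Ω r - b)^2) * deriv (fun ρ => W ρ / ((m:ℝ)^2 + k^2 * ρ^2)) r
        + 2 * (b - Ω r) / (a^2 + (Ω r - b)^2)^2 * (k^2 / (m:ℝ)^2)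
            * (r^2 * Φ r / ((m:ℝ)^2 + k^2 * r^2))) < 0 := by
    intro r hr
    have hr0 : 0 < r := hr
    have hden : 0 < a^2 + (Ω r - b)^2 := by positivity
    have h1 : r / (a^2 + (Ω r - b)^2)
        * deriv (fun ρ => W ρ / ((m:ℝ)^2 + k^2 * ρ^2)) r < 0 :=
      mul_neg_of_pos_of_neg (div_pos hr0 hden) (hWdec r hr0)
    have hΩr := hΩpos r hr0
    have hbneg : 2 * (b - Ω r) ≤ 0 := by linarith
    have hq : 2 * (b - Ω r) / (a^2 + (Ω r - b)^2)^2 ≤ 0 :=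
      div_nonpos_of_nonpos_of_nonneg hbneg (by positivity)
    have hkm : (0:ℝ) ≤ k^2 / (m:ℝ)^2 := by positivity
    have hmk : (0:ℝ) < (m:ℝ)^2 + k^2 * r^2 := by positivity
    have hΦr : (0:ℝ) ≤ r^2 * Φ r / ((m:ℝ)^2 + k^2 * r^2) :=
      div_nonneg (mul_nonneg (sq_nonneg r) (hΦ r hr0)) hmk.le
    have h2 : 2 * (b - Ω r) / (a^2 + (Ω r - b)^2)^2 * (k^2 / (m:ℝ)^2)
        * (r^2 * Φ r / ((m:ℝ)^2 + k^2 * r^2)) ≤ 0 :=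
      mul_nonpos_of_nonpos_of_nonneg
        (mul_nonpos_of_nonpos_of_nonneg hq hkm) hΦr
    linarith
  have hnonpos : ∀ r ∈ Ioi (0:ℝ), F r ≤ 0 := by
    intro r hr
    have hr0 : (0:ℝ) < r := hr
    exact mul_nonpos_of_nonpos_of_nonneg
      (mul_nonpos_of_nonpos_of_nonneg (hA r hr).le (sq_nonneg _)) hr0.le
  have hneg : ∀ r ∈ Ioi (0:ℝ), u r ≠ 0 → F r < 0 := by
    intro r hr hu
    have hr0 : (0:ℝ) < r := hr
    have hnorm : (0:ℝ) < ‖u r‖^2 := by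
      have : (0:ℝ) < ‖u r‖ := norm_pos_iff.mpr hu
      positivity
    exact mul_neg_of_neg_of_pos (mul_neg_of_neg_of_pos (hA r hr) hnorm) hr0
  -- F vanishes a.e. on Ioi 0
  have hnonnegae : 0 ≤ᵐ[volume.restrict (Ioi (0:ℝ))] (fun r => -F r) :=
    (ae_restrict_iff' measurableSet_Ioi).mpr
      (Filter.Eventually.of_forall fun r hr => neg_nonneg.mpr (hnonpos r hr))
  have hintneg : Integrable (fun r => -F r) (volume.restrict (Ioi (0:ℝ))) := hint.neg
  have hInt0 : ∫ r in Ioi (0:ℝ), -F r = 0 := by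
    rw [integral_neg, hI0, neg_zero]
  have hae0 : (fun r => -F r) =ᵐ[volume.restrict (Ioi (0:ℝ))] 0 :=
    (integral_eq_zero_iff_of_nonneg_ae hnonnegae hintneg).mp hInt0
  have hFall : ∀ᵐ r ∂(volume : Measure ℝ), r ∈ Ioi (0:ℝ) → F r = 0 := by
    have := (ae_restrict_iff' measurableSet_Ioi).mp hae0
    filter_upwards [this] with r h hr
    have := h hr
    simpa [neg_eq_zero] using this
  obtain ⟨r₀, hr₀, hu₀⟩ := hune
  have hcont : ContinuousAt u r₀ := huc.continuousAt (Ioi_mem_nhds hr₀)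
  have hev : ∀ᶠ x in nhds r₀, u x ≠ 0 ∧ x ∈ Ioi (0:ℝ) :=
    (hcont.eventually_ne hu₀).and (Ioi_mem_nhds hr₀)
  obtain ⟨s, hs_sub, hs_open, hr₀s⟩ := eventually_nhds_iff.mp hev
  have hs_null : volume s = 0 := by
    refine measure_mono_null ?_ (ae_iff.mp hFall)
    intro x hx
    obtain ⟨hux, hxpos⟩ := hs_sub x hx
    simp only [Set.mem_setOf_eq, Classical.not_imp]
    exact ⟨hxpos, (hneg x hxpos hux).ne⟩
  exact absurd hs_null (hs_open.measure_pos volume ⟨r₀, hr₀s⟩).ne'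
end
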